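/- arXiv:1407.6832 — 2 statements merged into one kernel-verified Lean document; each statement's English description precedes it below -/
import Mathlib

section
/- If s₁ and s₂ are natural numbers with 1 ≤ s₂ < s₁ ≤ s_max, then s₁·(2 + log₂ s_max − log₂ s₁) > s₂·(2 + log₂ s_max − log₂ s₂). -/
/-- Lemma 3: if 1 ≤ s₂ < s₁ ≤ s_max then
s₁·(2 + log₂ s_max − log₂ s₁) > s₂·(2 + log₂ s_max − log₂ s₂). -/
theorem stmt_2 (s₁ s₂ sMax : ℕ) (h1 : 1 ≤ s₂) (h2 : s₂ < s₁) (h3 : s₁ ≤ sMax) :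
    (s₁ : ℝ) * (2 + Real.logb 2 sMax - Real.logb 2 s₁)
      > (s₂ : ℝ) * (2 + Real.logb 2 sMax - Real.logb 2 s₂) := by
  have ha : (1:ℝ) ≤ (s₂:ℝ) := by exact_mod_cast h1
  have hab : (s₂:ℝ) < (s₁:ℝ) := by exact_mod_cast h2
  have hbm : (s₁:ℝ) ≤ (sMax:ℝ) := by exact_mod_cast h3
  have ha0 : (0:ℝ) < (s₂:ℝ) := by linarith
  have hb0 : (0:ℝ) < (s₁:ℝ) := by linarith
  have hl2 : Real.log 2 > 0.6931471803 := Real.log_two_gt_d9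
  have hl2' : (0:ℝ) < Real.log 2 := by linarith
  have hlogm : Real.log (s₁:ℝ) ≤ Real.log (sMax:ℝ) := Real.log_le_log hb0 hbm
  have hloga : Real.log (s₂:ℝ) ≤ Real.log (s₁:ℝ) := Real.log_le_log ha0 (le_of_lt hab)
  have hkey : (s₂:ℝ) * (Real.log (s₁:ℝ) - Real.log (s₂:ℝ)) ≤ (s₁:ℝ) - (s₂:ℝ) := by
    have h := Real.log_le_sub_one_of_pos (div_pos hb0 ha0)
    rw [Real.log_div (ne_of_gt hb0) (ne_of_gt ha0)] at h
    have h2 : (s₂:ℝ) * (Real.log (s₁:ℝ) - Real.log (s₂:ℝ)) ≤ (s₂:ℝ) * ((s₁:ℝ)/(s₂:ℝ) - 1) :=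
      mul_le_mul_of_nonneg_left h (le_of_lt ha0)
    have h3 : (s₂:ℝ) * ((s₁:ℝ)/(s₂:ℝ) - 1) = (s₁:ℝ) - (s₂:ℝ) := by
      field_simp
    linarith
  have hrw : ∀ x : ℝ, 2 + Real.logb 2 (sMax:ℝ) - Real.logb 2 x
      = (2 * Real.log 2 + Real.log (sMax:ℝ) - Real.log x) / Real.log 2 := by
    intro x
    rw [Real.logb, Real.logb]
    field_simp
  rw [gt_iff_lt, hrw, hrw, mul_div_assoc', mul_div_assoc',
    div_lt_div_iff_of_pos_right hl2']
  have hprod : ((s₁:ℝ) - (s₂:ℝ)) * (Real.log (sMax:ℝ) - Real.log (s₁:ℝ)) ≥ 0 :=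
    mul_nonneg (by linarith) (by linarith)
  nlinarith [hprod, hkey, hab, hl2]
end

section
/- If a path from root to leaf in the cluster-forest encounters queue nodes whose associated labels strictly decrease with gap ≥ g₁ = ⌈ε_q log log n⌉ (types 1–3) and type-4 nodes separated by rank drops of at least g₂ = c·log log n, and all labels lie in [0, c'·log n], then the total number of queue nodes on the path is O((1/ε_q + 1/ε_h)·log n/log log n). -/
open Filter Real

/-!
A strictly decreasing sequence of naturals in `[0, c' log n]` with gaps at least `ε log log n`
has at most `c' log n / (ε log log n) + 1` terms. Since `log log n ≤ log n`, the two additive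
constants are absorbed into the main term.
-/

lemma add_mul_le_of_forall_succ_add_le {a : ℕ → ℕ} {g k : ℕ}
    (h : ∀ j < k, a (j + 1) + g ≤ a j) : a k + k * g ≤ a 0 := by
  induction k with
  | zero => simp
  | succ k ih =>
    have hstep := h k k.lt_succ_self
    have hprev := ih fun j hj => h j (hj.trans k.lt_succ_self)
    rw [Nat.succ_mul]
    omega

lemma natCast_le_div_of_forall_succ_add_ceil_le {a : ℕ → ℕ} {k : ℕ} {x M : ℝ} (hx : 0 < x)
    (h : ∀ j < k, a (j + 1) + ⌈x⌉₊ ≤ a j) (hM : (a 0 : ℝ) ≤ M) : (k : ℝ) ≤ M / x := by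
  have hcount : ((a k + k * ⌈x⌉₊ : ℕ) : ℝ) ≤ a 0 := by
    exact_mod_cast add_mul_le_of_forall_succ_add_le h
  push_cast at hcount
  rw [le_div_iff₀ hx]
  nlinarith [Nat.le_ceil x, (a k).cast_nonneg (α := ℝ), k.cast_nonneg (α := ℝ)]

lemma logb_two_le_self {x : ℝ} (hx : 1 ≤ x) : logb 2 x ≤ x := by
  rw [logb_le_iff_le_rpow one_lt_two (by positivity)]
  have hBernoulli := one_add_mul_self_le_rpow_one_add (s := 1) (by norm_num) hx
  norm_num at hBernoulli
  linarith

lemma logb_two_logb_two_pos_and_le {n : ℕ} (hn : 3 ≤ n) :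
    0 < logb 2 (logb 2 n) ∧ logb 2 (logb 2 n) ≤ logb 2 n := by
  have hL : 1 < logb 2 n := by
    rw [lt_logb_iff_rpow_lt one_lt_two (by positivity)]
    norm_num
    exact_mod_cast hn
  exact ⟨logb_pos one_lt_two hL, logb_two_le_self hL.le⟩

/-- Combining the gap-counting lemma for the type-1–3 queue nodes (label gaps at least
⌈ε_q·log log n⌉) and the type-4 queue nodes (rank drops at least ⌈c·log log n⌉), with all
labels in [0, c'·log n], the total number of queue nodes on a downward shortcut path is
O((1/ε_q + 1/ε_h)·log n/log log n). -/
theorem stmt_17 (εq εh c c' : ℝ) (hq : 0 < εq) (hh : 0 < εh) (hc : 0 < c) (hc' : 0 < c') :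
    ∃ K > (0 : ℝ), ∀ᶠ n : ℕ in atTop, ∀ (k₁ k₂ : ℕ) (a b : ℕ → ℕ),
      (∀ j ≤ k₁, (a j : ℝ) ≤ c' * Real.logb 2 n) →
      (∀ j < k₁, a (j + 1) + ⌈εq * Real.logb 2 (Real.logb 2 n)⌉₊ ≤ a j) →
      (∀ j ≤ k₂, (b j : ℝ) ≤ c' * Real.logb 2 n) →
      (∀ j < k₂, b (j + 1) + ⌈c * Real.logb 2 (Real.logb 2 n)⌉₊ ≤ b j) →
      ((k₁ + 1 + (k₂ + 1) : ℕ) : ℝ)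
        ≤ K * (1 / εq + 1 / εh) * (Real.logb 2 n / Real.logb 2 (Real.logb 2 n)) := by
  refine ⟨εq * (c' / εq + c' / c + 2), by positivity, ?_⟩
  filter_upwards [eventually_ge_atTop 3] with n hn k₁ k₂ a b ha_le ha_gap hb_le hb_gap
  obtain ⟨hLL, hLL_le⟩ := logb_two_logb_two_pos_and_le hn
  set L := logb 2 (n : ℝ)
  set LL := logb 2 L
  have hk₁ : (k₁ : ℝ) ≤ c' * L / (εq * LL) :=
    natCast_le_div_of_forall_succ_add_ceil_le (by positivity) ha_gap (ha_le 0 k₁.zero_le)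
  have hk₂ : (k₂ : ℝ) ≤ c' * L / (c * LL) :=
    natCast_le_div_of_forall_succ_add_ceil_le (by positivity) hb_gap (hb_le 0 k₂.zero_le)
  have hR : 1 ≤ L / LL := (one_le_div hLL).2 hLL_le
  calc ((k₁ + 1 + (k₂ + 1) : ℕ) : ℝ) = k₁ + k₂ + 2 := by push_cast; ring
    _ ≤ c' / εq * (L / LL) + c' / c * (L / LL) + 2 * (L / LL) := by
      rw [div_mul_div_comm, div_mul_div_comm]
      linarith
    _ = εq * (c' / εq + c' / c + 2) * (1 / εq) * (L / LL) := by field_simp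
    _ ≤ εq * (c' / εq + c' / c + 2) * (1 / εq + 1 / εh) * (L / LL) := by
      gcongr
      exact le_add_of_nonneg_right (by positivity)
end
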